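/- Let {B_n}_{n≥1} and {C_n}_{n≥1} be column-stochastic N×N matrices with all entries ≥ α/N (α ∈ (0,1)), and let b, c ∈ ℝ^N satisfy e^T b = e^T c = 0. Then with β = 1 − α and K = 4β^{-1}N, for every n ≥ 1: ‖B₁⋯Bₙ b − C₁⋯Cₙ c‖ ≤ Kβⁿ(‖b‖ + ‖c‖)·Σ_{i=1}^n ‖B_i − C_i‖ + Kβⁿ‖b − c‖. -/
import Mathlib


open Finset

/-- A column-stochastic matrix: nonnegative entries, each column sums to 1. -/
def ColStochastic {N : ℕ} (A : Matrix (Fin (N+1)) (Fin (N+1)) ℝ) : Prop :=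
  (∀ i j, 0 ≤ A i j) ∧ ∀ j, ∑ i, A i j = 1

/-- The Euclidean norm of a vector. -/
noncomputable def eNorm {n : ℕ} (v : Fin n → ℝ) : ℝ :=
  Real.sqrt (∑ i, (v i)^2)

/-- The Frobenius norm of a real matrix. -/
noncomputable def frobNorm {m n : ℕ} (A : Matrix (Fin m) (Fin n) ℝ) : ℝ :=
  Real.sqrt (∑ i, ∑ j, (A i j)^2)

/-- The product `A₁A₂⋯Aₙ` (in order), with the empty product equal to `I`. -/
def matProd {N : ℕ} (A : ℕ → Matrix (Fin (N+1)) (Fin (N+1)) ℝ) : ℕ → Matrix (Fin (N+1)) (Fin (N+1)) ℝ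
  | 0 => 1
  | n+1 => matProd A n * A (n+1)


noncomputable def l1 {n : ℕ} (v : Fin n → ℝ) : ℝ := ∑ i, |v i|

lemma l1_nonneg {n : ℕ} (v : Fin n → ℝ) : 0 ≤ l1 v :=
  Finset.sum_nonneg fun i _ => abs_nonneg _

lemma l1_add_le {n : ℕ} (v w : Fin n → ℝ) : l1 (v + w) ≤ l1 v + l1 w := by
  rw [l1, l1, l1, ← Finset.sum_add_distrib]
  exact Finset.sum_le_sum fun i _ => abs_add_le _ _
/-- norm equivalences -/
lemma eNorm_le_l1 {n : ℕ} (v : Fin n → ℝ) : eNorm v ≤ l1 v := by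
  rw [eNorm, l1]
  have h : ∑ i, (v i)^2 ≤ (∑ i, |v i|)^2 := by
    calc ∑ i, (v i)^2 = ∑ i, |v i|^2 := by simp [sq_abs]
    _ ≤ (∑ i, |v i|)^2 := Finset.sum_sq_le_sq_sum_of_nonneg (fun i _ => abs_nonneg _)
  calc Real.sqrt (∑ i, (v i)^2) ≤ Real.sqrt ((∑ i, |v i|)^2) := Real.sqrt_le_sqrt h
  _ = ∑ i, |v i| := Real.sqrt_sq (Finset.sum_nonneg fun i _ => abs_nonneg _)

lemma l1_le_sqrt_eNorm {n : ℕ} (v : Fin n → ℝ) : l1 v ≤ Real.sqrt n * eNorm v := by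
  rw [l1, eNorm]
  have h : (∑ i, |v i|)^2 ≤ (n : ℝ) * ∑ i, (v i)^2 := by
    have := sq_sum_le_card_mul_sum_sq (s := (Finset.univ : Finset (Fin n))) (f := fun i => |v i|)
    simpa [sq_abs] using this
  calc ∑ i, |v i| = Real.sqrt ((∑ i, |v i|)^2) :=
        (Real.sqrt_sq (Finset.sum_nonneg fun i _ => abs_nonneg _)).symm
  _ ≤ Real.sqrt ((n : ℝ) * ∑ i, (v i)^2) := Real.sqrt_le_sqrt h
  _ = Real.sqrt n * Real.sqrt (∑ i, (v i)^2) := Real.sqrt_mul (Nat.cast_nonneg n) _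
/-- column l1 bound by Frobenius norm -/
lemma col_l1_le {N : ℕ} (D : Matrix (Fin (N+1)) (Fin (N+1)) ℝ) (k : Fin (N+1)) :
    ∑ j, |D j k| ≤ Real.sqrt (N+1) * frobNorm D := by
  have h1 : (∑ j, |D j k|)^2 ≤ ((N+1 : ℕ) : ℝ) * ∑ j, (D j k)^2 := by
    have := sq_sum_le_card_mul_sum_sq (s := (Finset.univ : Finset (Fin (N+1))))
      (f := fun j => |D j k|)
    simpa [sq_abs] using this
  have h2 : ∑ j, (D j k)^2 ≤ ∑ j, ∑ k', (D j k')^2 := by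
    refine Finset.sum_le_sum fun j _ => ?_
    exact Finset.single_le_sum (f := fun k' => (D j k')^2) (fun k' _ => sq_nonneg _) (Finset.mem_univ k)
  calc ∑ j, |D j k| = Real.sqrt ((∑ j, |D j k|)^2) :=
        (Real.sqrt_sq (Finset.sum_nonneg fun j _ => abs_nonneg _)).symm
  _ ≤ Real.sqrt (((N+1 : ℕ) : ℝ) * ∑ j, ∑ k', (D j k')^2) := by
      refine Real.sqrt_le_sqrt (h1.trans ?_)
      exact mul_le_mul_of_nonneg_left h2 (by positivity)
  _ = Real.sqrt (N+1) * frobNorm D := by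
      rw [frobNorm, ← Real.sqrt_mul (by positivity)]
      norm_num

/-- l1 of D·v bound -/
lemma l1_mulVec_le {N : ℕ} (D : Matrix (Fin (N+1)) (Fin (N+1)) ℝ) (v : Fin (N+1) → ℝ) :
    l1 (D.mulVec v) ≤ Real.sqrt (N+1) * frobNorm D * l1 v := by
  rw [l1]
  calc ∑ j, |D.mulVec v j| ≤ ∑ j, ∑ k, |D j k| * |v k| := by
        refine Finset.sum_le_sum fun j _ => ?_
        rw [Matrix.mulVec, dotProduct]
        exact (Finset.abs_sum_le_sum_abs _ _).trans (le_of_eq (by simp [abs_mul]))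
  _ = ∑ k, (∑ j, |D j k|) * |v k| := by rw [Finset.sum_comm]; simp [Finset.sum_mul]
  _ ≤ ∑ k, (Real.sqrt (N+1) * frobNorm D) * |v k| := by
        refine Finset.sum_le_sum fun k _ => mul_le_mul_of_nonneg_right (col_l1_le D k) (abs_nonneg _)
  _ = Real.sqrt (N+1) * frobNorm D * l1 v := by rw [l1, ← Finset.mul_sum]

/-- stochastic preserves zero sum -/
lemma sum_mulVec_zero {N : ℕ} {A : Matrix (Fin (N+1)) (Fin (N+1)) ℝ} (hA : ColStochastic A)
    {v : Fin (N+1) → ℝ} (hv : ∑ i, v i = 0) : ∑ j, A.mulVec v j = 0 := by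
  have : ∑ j, A.mulVec v j = ∑ k, (∑ j, A j k) * v k := by
    simp only [Matrix.mulVec, dotProduct]
    rw [Finset.sum_comm]; simp [Finset.sum_mul]
  rw [this]
  simp only [hA.2]
  simpa using hv

/-- contraction in l1 for zero-sum vectors -/
lemma l1_contract {N : ℕ} {A : Matrix (Fin (N+1)) (Fin (N+1)) ℝ} {α : ℝ}
    (hA : ColStochastic A) (hent : ∀ i j, α / (N+1 : ℝ) ≤ A i j)
    {v : Fin (N+1) → ℝ} (hv : ∑ i, v i = 0) :
    l1 (A.mulVec v) ≤ (1 - α) * l1 v := by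
  have hNpos : (0:ℝ) < (N+1 : ℝ) := by positivity
  have key : ∀ j, A.mulVec v j = ∑ k, (A j k - α / (N+1 : ℝ)) * v k := by
    intro j
    simp only [Matrix.mulVec, dotProduct, sub_mul, Finset.sum_sub_distrib]
    rw [← Finset.mul_sum, hv]
    ring
  rw [l1]
  calc ∑ j, |A.mulVec v j| ≤ ∑ j, ∑ k, (A j k - α / (N+1 : ℝ)) * |v k| := by
        refine Finset.sum_le_sum fun j _ => ?_
        rw [key j]
        refine (Finset.abs_sum_le_sum_abs _ _).trans (Finset.sum_le_sum fun k _ => ?_)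
        rw [abs_mul, abs_of_nonneg (by linarith [hent j k])]
  _ = ∑ k, (1 - α) * |v k| := by
        rw [Finset.sum_comm]
        refine Finset.sum_congr rfl fun k _ => ?_
        rw [← Finset.sum_mul]
        congr 1
        rw [Finset.sum_sub_distrib, hA.2 k, Finset.sum_const]
        have : ((N:ℝ)+1) * (α/((N:ℝ)+1)) = α := by field_simp
        simp only [Finset.card_univ, Fintype.card_fin, nsmul_eq_mul, Nat.cast_add, Nat.cast_one]
        rw [this]
  _ = (1 - α) * l1 v := by rw [l1, ← Finset.mul_sum]
lemma frob_nonneg {m n : ℕ} (A : Matrix (Fin m) (Fin n) ℝ) : 0 ≤ frobNorm A :=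
  Real.sqrt_nonneg _

lemma claim {N : ℕ} (B C : ℕ → Matrix (Fin (N+1)) (Fin (N+1)) ℝ)
    (hB : ∀ n, 1 ≤ n → ColStochastic (B n)) (hC : ∀ n, 1 ≤ n → ColStochastic (C n))
    (α : ℝ) (hα : α ∈ Set.Ioo (0:ℝ) 1)
    (hBentry : ∀ n, 1 ≤ n → ∀ i j, α / (N+1 : ℝ) ≤ B n i j)
    (hCentry : ∀ n, 1 ≤ n → ∀ i j, α / (N+1 : ℝ) ≤ C n i j) :
    ∀ n, ∀ b c : Fin (N+1) → ℝ, (∑ i, b i = 0) → (∑ i, c i = 0) →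
      l1 ((matProd B n).mulVec b - (matProd C n).mulVec c) ≤
        (1-α)^n * l1 (b - c) +
        Real.sqrt (N+1) * (1-α)⁻¹ * (1-α)^n * (l1 b + l1 c) *
          ∑ i ∈ Icc 1 n, frobNorm (B i - C i) := by
  intro n
  induction n with
  | zero =>
    intro b c hb hc
    simp [matProd, Matrix.one_mulVec]
  | succ n ih =>
    intro b c hb hc
    have h1 : (1:ℕ) ≤ n+1 := by omega
    have hβ : (0:ℝ) < 1 - α := by have := hα.2; linarith
    set b' := (B (n+1)).mulVec b with hb'def
    set c' := (C (n+1)).mulVec c with hc'def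
    have hb' : ∑ i, b' i = 0 := sum_mulVec_zero (hB (n+1) h1) hb
    have hc' : ∑ i, c' i = 0 := sum_mulVec_zero (hC (n+1) h1) hc
    have hrw : (matProd B (n+1)).mulVec b - (matProd C (n+1)).mulVec c
        = (matProd B n).mulVec b' - (matProd C n).mulVec c' := by
      simp only [matProd, ← Matrix.mulVec_mulVec, hb'def, hc'def]
    have hbb : l1 b' ≤ (1-α) * l1 b := l1_contract (hB (n+1) h1) (hBentry (n+1) h1) hb
    have hcc : l1 c' ≤ (1-α) * l1 c := l1_contract (hC (n+1) h1) (hCentry (n+1) h1) hc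
    have hbc : ∑ i, (b - c) i = 0 := by
      simp [Pi.sub_apply, Finset.sum_sub_distrib, hb, hc]
    have hsplit : b' - c' = (B (n+1)).mulVec (b - c) + ((B (n+1) - C (n+1)).mulVec c) := by
      rw [Matrix.mulVec_sub, Matrix.sub_mulVec, hb'def, hc'def]; abel
    have hd : l1 (b' - c') ≤ (1-α) * l1 (b - c)
        + Real.sqrt (N+1) * frobNorm (B (n+1) - C (n+1)) * l1 c := by
      rw [hsplit]
      exact (l1_add_le _ _).trans (add_le_add
        (l1_contract (hB (n+1) h1) (hBentry (n+1) h1) hbc)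
        (l1_mulVec_le _ _))
    rw [hrw, Finset.sum_Icc_succ_top h1]
    refine (ih b' c' hb' hc').trans ?_
    set s := Real.sqrt ((N:ℝ)+1) with hsdef
    set S := ∑ i ∈ Icc 1 n, frobNorm (B i - C i) with hSdef
    set D := frobNorm (B (n+1) - C (n+1)) with hDdef
    have hS : 0 ≤ S := Finset.sum_nonneg fun i _ => frob_nonneg _
    have hD : 0 ≤ D := frob_nonneg _
    have hs : 0 ≤ s := Real.sqrt_nonneg _
    have hinv : (1-α)⁻¹ * (1-α)^(n+1) = (1-α)^n := by
      rw [pow_succ]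
      field_simp
    have A1 : (1-α)^n * l1 (b'-c') ≤ (1-α)^n * ((1-α)*l1 (b-c) + s * D * l1 c) :=
      mul_le_mul_of_nonneg_left hd (by positivity)
    have A2 : s*(1-α)⁻¹*(1-α)^n*(l1 b'+l1 c')*S
        ≤ s*(1-α)⁻¹*(1-α)^n*((1-α)*l1 b + (1-α)*l1 c)*S :=
      mul_le_mul_of_nonneg_right
        (mul_le_mul_of_nonneg_left (add_le_add hbb hcc) (by positivity)) hS
    have A3 : s*(1-α)^n*D*(l1 c) ≤ s*(1-α)^n*D*(l1 b + l1 c) :=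
      mul_le_mul_of_nonneg_left (le_add_of_nonneg_left (l1_nonneg b)) (by positivity)
    have E1 : s*(1-α)⁻¹*(1-α)^(n+1)*(l1 b + l1 c)*D = s*(1-α)^n*D*(l1 b + l1 c) := by
      rw [← hinv]; ring
    have E2 : s*(1-α)⁻¹*(1-α)^(n+1)*(l1 b + l1 c)*S
        = s*(1-α)⁻¹*(1-α)^n*((1-α)*l1 b + (1-α)*l1 c)*S := by
      rw [pow_succ]; ring
    have E3 : (1-α)^n * ((1-α)*l1 (b-c) + s * D * l1 c)
        = (1-α)^(n+1) * l1 (b-c) + s*(1-α)^n*D*(l1 c) := by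
      rw [pow_succ]; ring
    have goal_eq : (1-α)^(n+1) * l1 (b - c) + s*(1-α)⁻¹*(1-α)^(n+1)*(l1 b + l1 c)*(S + D)
        = (1-α)^(n+1) * l1 (b - c) + s*(1-α)⁻¹*(1-α)^(n+1)*(l1 b + l1 c)*S
          + s*(1-α)⁻¹*(1-α)^(n+1)*(l1 b + l1 c)*D := by ring
    linarith [A1, A2, A3, E1.ge, E2.ge, E3.ge]

/-- for column-stochastic matrices `Bₙ`, `Cₙ` with entries `≥ α/N`
    and vectors `b`, `c` with zero coordinate sums, setting `β = 1 − α` and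
    `K = 4β⁻¹N`,
    `‖B₁⋯Bₙ b − C₁⋯Cₙ c‖ ≤ Kβⁿ(‖b‖+‖c‖)·Σ_{i=1}^n ‖B_i − C_i‖ + Kβⁿ‖b−c‖`. -/
theorem stmt6 {N : ℕ} (B C : ℕ → Matrix (Fin (N+1)) (Fin (N+1)) ℝ)
    (hB : ∀ n, 1 ≤ n → ColStochastic (B n)) (hC : ∀ n, 1 ≤ n → ColStochastic (C n))
    (α : ℝ) (hα : α ∈ Set.Ioo (0:ℝ) 1)
    (hBentry : ∀ n, 1 ≤ n → ∀ i j, α / (N+1 : ℝ) ≤ B n i j)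
    (hCentry : ∀ n, 1 ≤ n → ∀ i j, α / (N+1 : ℝ) ≤ C n i j)
    (b c : Fin (N+1) → ℝ) (hb : ∑ i, b i = 0) (hc : ∑ i, c i = 0) :
    ∀ n, 1 ≤ n →
      eNorm ((matProd B n).mulVec b - (matProd C n).mulVec c) ≤
        (4 * (1-α)⁻¹ * (N+1 : ℝ)) * (1-α)^n * (eNorm b + eNorm c) *
          (∑ i ∈ Finset.Icc 1 n, frobNorm (B i - C i))
        + (4 * (1-α)⁻¹ * (N+1 : ℝ)) * (1-α)^n * eNorm (b - c) := by
  intro n hn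
  have hβ : (0:ℝ) < 1 - α := by have := hα.2; linarith
  have hα0 : (0:ℝ) < α := hα.1
  have hcl := claim B C hB hC α hα hBentry hCentry n b c hb hc
  set s := Real.sqrt ((N:ℝ)+1) with hsdef
  have hs : 0 ≤ s := Real.sqrt_nonneg _
  have hs2 : s * s = (N:ℝ)+1 := Real.mul_self_sqrt (by positivity)
  have hcast : (((N+1 : ℕ)):ℝ) = (N:ℝ)+1 := by push_cast; ring
  have hEnn : ∀ v : Fin (N+1) → ℝ, 0 ≤ eNorm v := fun v => Real.sqrt_nonneg _
  have hb1 : l1 b ≤ s * eNorm b := by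
    have := l1_le_sqrt_eNorm b; rwa [hcast] at this
  have hc1 : l1 c ≤ s * eNorm c := by
    have := l1_le_sqrt_eNorm c; rwa [hcast] at this
  have hbc1 : l1 (b - c) ≤ s * eNorm (b - c) := by
    have := l1_le_sqrt_eNorm (b - c); rwa [hcast] at this
  set S := ∑ i ∈ Finset.Icc 1 n, frobNorm (B i - C i) with hSdef
  have hSnn : 0 ≤ S := Finset.sum_nonneg fun i _ => frob_nonneg _
  have hβinv : 1 ≤ (1-α)⁻¹ := by
    have h := mul_inv_cancel₀ hβ.ne'
    nlinarith [mul_nonneg hα0.le (inv_nonneg.mpr hβ.le)]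
  have hsle : s ≤ (N:ℝ)+1 := by nlinarith [sq_nonneg (s-1)]
  have hsK : s ≤ 4*(1-α)⁻¹*((N:ℝ)+1) := by nlinarith [hβinv, hsle]
  calc eNorm ((matProd B n).mulVec b - (matProd C n).mulVec c)
      ≤ l1 ((matProd B n).mulVec b - (matProd C n).mulVec c) := eNorm_le_l1 _
    _ ≤ (1-α)^n * l1 (b - c) + s*(1-α)⁻¹*(1-α)^n*(l1 b + l1 c)*S := hcl
    _ ≤ (1-α)^n * (s * eNorm (b-c)) + s*(1-α)⁻¹*(1-α)^n*(s*eNorm b + s*eNorm c)*S := by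
        refine add_le_add (mul_le_mul_of_nonneg_left hbc1 (by positivity)) ?_
        refine mul_le_mul_of_nonneg_right ?_ hSnn
        refine mul_le_mul_of_nonneg_left (add_le_add hb1 hc1) ?_
        exact mul_nonneg (mul_nonneg hs (by positivity)) (by positivity)
    _ = s*((1-α)^n*eNorm (b-c)) + (s*s)*((1-α)⁻¹*((1-α)^n*((eNorm b + eNorm c)*S))) := by
        ring
    _ = s*((1-α)^n*eNorm (b-c))
        + (((N:ℝ)+1)*(1-α)⁻¹)*((1-α)^n*((eNorm b + eNorm c)*S)) := by rw [hs2]; ring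
    _ ≤ (4 * (1-α)⁻¹ * ((N:ℝ)+1)) * (1-α)^n * (eNorm b + eNorm c) * S
        + (4 * (1-α)⁻¹ * ((N:ℝ)+1)) * (1-α)^n * eNorm (b - c) := by
        have f1 : (0:ℝ) ≤ (1-α)^n*eNorm (b-c) :=
          mul_nonneg (by positivity) (hEnn _)
        have f2 : (0:ℝ) ≤ (1-α)^n*((eNorm b + eNorm c)*S) :=
          mul_nonneg (by positivity) (mul_nonneg (add_nonneg (hEnn _) (hEnn _)) hSnn)
        have t1 := mul_le_mul_of_nonneg_right hsK f1
        have hcoef : ((N:ℝ)+1)*(1-α)⁻¹ ≤ 4 * (1-α)⁻¹ * ((N:ℝ)+1) := by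
          nlinarith [inv_nonneg.mpr hβ.le]
        have t2 := mul_le_mul_of_nonneg_right hcoef f2
        nlinarith [t1, t2]
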